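/- Let ν_0 : ℤ^d → [0,∞) be an initial mass configuration. If T_1 : [0,τ_1] → ℤ^d and T_2 : [0,τ_2] → ℤ^d are both complete legal toppling functions for ν_0, then for every x ∈ ℤ^d, Leb(T_1^{−1}(x)) = Leb(T_2^{−1}(x)). In particular τ_1 = τ_2 and the final mass configurations coincide. -/

import Mathlib

open MeasureTheory Metric Filter
open scoped ENNReal

noncomputable section

/-- The lattice `ℤ^d`. -/
abbrev Pos (d : ℕ) := Fin d → ℤ

/-! ### The divisible sandpile (continuous-time toppling formulation) -/

/-- The sum of `f` over the `2d` lattice neighbors of `x`. -/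
def nbrSum (d : ℕ) (f : Pos d → ℝ) (x : Pos d) : ℝ :=
  ∑ i : Fin d, (f (Function.update x i (x i + 1)) + f (Function.update x i (x i - 1)))

/-- The discrete Laplacian `Δf(x) = (1/2d) Σ_{y∼x} f(y) − f(x)` on `ℤ^d`. -/
def discLap (d : ℕ) (f : Pos d → ℝ) (x : Pos d) : ℝ := nbrSum d f x / (2 * d) - f x

/-- The odometer at time `t` of a toppling function `T`: `u_t(x) = Leb(T⁻¹(x) ∩ [0,t])`. -/
def odo (d : ℕ) (T : ℝ → Pos d) (t : ℝ) (x : Pos d) : ℝ :=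
  (volume (T ⁻¹' {x} ∩ Set.Icc 0 t)).toReal

/-- The mass at time `t`: `ν_t = ν_0 + Δ u_t`. -/
def massAt (d : ℕ) (ν0 : Pos d → ℝ) (T : ℝ → Pos d) (t : ℝ) (x : Pos d) : ℝ :=
  ν0 x + discLap d (odo d T t) x

/-- `T : [0,τ] → ℤ^d` has only finitely many discontinuities in `[0,t]` for every `t < τ`. -/
def IsToppling (d : ℕ) (T : ℝ → Pos d) (τ : ℝ) : Prop :=
  ∀ t : ℝ, t < τ → {s : ℝ | s ∈ Set.Icc 0 t ∧ ¬ ContinuousAt T s}.Finite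

/-- `T` is a legal toppling function for `ν_0` on `[0,τ]`: only finitely many discontinuities
in `[0,t]` for `t < τ`, and `ν_t(T(t)) ≥ 1` for all `t ∈ [0,τ]`. -/
def IsLegalToppling (d : ℕ) (ν0 : Pos d → ℝ) (T : ℝ → Pos d) (τ : ℝ) : Prop :=
  IsToppling d T τ ∧ ∀ t ∈ Set.Icc (0 : ℝ) τ, 1 ≤ massAt d ν0 T t (T t)

/-- `T` is complete: the final mass satisfies `ν_τ ≤ 1` everywhere. -/
def IsCompleteToppling (d : ℕ) (ν0 : Pos d → ℝ) (T : ℝ → Pos d) (τ : ℝ) : Prop :=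
  ∀ x, massAt d ν0 T τ x ≤ 1

/-- `D` is the domain of fully occupied sites (`ν = 1`) for the divisible sandpile started
from the mass configuration `ν_0`, i.e. the final state of some complete legal toppling. -/
def SandpileDomain (d : ℕ) (ν0 : Pos d → ℝ) (D : Set (Pos d)) : Prop :=
  ∃ (T : ℝ → Pos d) (τ : ℝ), 0 ≤ τ ∧ IsLegalToppling d ν0 T τ ∧ IsCompleteToppling d ν0 T τ ∧
    D = {x | massAt d ν0 T τ x = 1}

/-! The odometer of a legal toppling is dominated by every nonnegative `u` with `ν₀ + Δu ≤ 1`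
(least action principle). Run time forward from the last moment `c` at which `u_c ≤ u`: just after
`c` the toppling sits at a single site `x₀`. If `u_c(x₀) < u(x₀)` there is room to continue, and
if `u_c(x₀) = u(x₀)` then toppling at `x₀` pushes `u_t(x₀)` above `u(x₀)` while the neighbours
stay below `u`, so `ν_t(x₀) < ν₀(x₀) + Δu(x₀) ≤ 1`, contradicting legality. Applying this to two
complete legal topplings in both directions gives equal odometers, hence equal final masses, and
equal durations, since the odometers at the final time sum to the total time. -/

open Set Topology

theorem measurableSet_preimage_inter_of_countable_not_continuousAt {α β : Type*}
    [TopologicalSpace α] [MeasurableSpace α] [OpensMeasurableSpace α] [MeasurableSingletonClass α]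
    [TopologicalSpace β] {f : α → β} {s : Set α} (hs : MeasurableSet s)
    (hf : {a ∈ s | ¬ ContinuousAt f a}.Countable) {t : Set β} (ht : IsOpen t) :
    MeasurableSet (f ⁻¹' t ∩ s) := by
  set D := {a ∈ s | ¬ ContinuousAt f a}
  have hcont : ContinuousOn f (s \ D) := fun a ha =>
    (not_not.1 fun h => ha.2 ⟨ha.1, h⟩ : ContinuousAt f a).continuousWithinAt
  obtain ⟨u, hu, hfu⟩ := continuousOn_iff'.1 hcont t ht
  rw [← sdiff_union_of_subset (sep_subset s _), inter_union_distrib_left, hfu]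
  exact (hu.measurableSet.inter (hs.diff hf.measurableSet)).union
    (hf.mono inter_subset_right).measurableSet

section Odometer

variable {d : ℕ} {T : ℝ → Pos d}

theorem volume_preimage_inter_Icc_ne_top (T : ℝ → Pos d) (t : ℝ) (x : Pos d) :
    volume (T ⁻¹' {x} ∩ Icc 0 t) ≠ ∞ :=
  ne_top_of_le_ne_top (by simp [Real.volume_Icc]) (measure_mono inter_subset_right)

theorem odo_nonneg (T : ℝ → Pos d) (t : ℝ) : 0 ≤ odo d T t :=
  fun _ => ENNReal.toReal_nonneg

theorem odo_zero (T : ℝ → Pos d) : odo d T 0 = 0 := by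
  funext x
  simp [odo, Icc_self, measure_mono_null inter_subset_right (measure_singleton (0 : ℝ))]

theorem odo_le_add_dist (T : ℝ → Pos d) (x : Pos d) (s t : ℝ) :
    odo d T t x ≤ odo d T s x + dist t s := by
  have hvol : volume (T ⁻¹' {x} ∩ Icc 0 t) ≤
      volume (T ⁻¹' {x} ∩ Icc 0 s) + ENNReal.ofReal (dist t s) :=
    calc volume (T ⁻¹' {x} ∩ Icc 0 t)
        ≤ volume (T ⁻¹' {x} ∩ Icc 0 s ∪ Ioc s t) :=
          measure_mono fun r ⟨hr, hrt⟩ => (Icc_subset_Icc_union_Ioc hrt).imp (⟨hr, ·⟩) id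
      _ ≤ volume (T ⁻¹' {x} ∩ Icc 0 s) + volume (Ioc s t) := measure_union_le _ _
      _ ≤ _ := by
          rw [Real.volume_Ioc, Real.dist_eq]
          gcongr
          exact le_abs_self _
  calc odo d T t x
      ≤ (volume (T ⁻¹' {x} ∩ Icc 0 s) + ENNReal.ofReal (dist t s)).toReal :=
        ENNReal.toReal_mono (by finiteness [volume_preimage_inter_Icc_ne_top T s x]) hvol
    _ = odo d T s x + dist t s := by
        rw [ENNReal.toReal_add (volume_preimage_inter_Icc_ne_top T s x) ENNReal.ofReal_ne_top,
          ENNReal.toReal_ofReal dist_nonneg, odo]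

theorem continuous_odo (T : ℝ → Pos d) : Continuous (odo d T) :=
  continuous_pi fun x => (LipschitzWith.of_le_add fun t s => odo_le_add_dist T x s t).continuous

theorem odo_eq_add_single {s t : ℝ} {x₀ : Pos d} (hs : 0 ≤ s) (hst : s ≤ t)
    (hT : Ioc s t ⊆ T ⁻¹' {x₀}) :
    odo d T t = odo d T s + Pi.single x₀ (t - s) := by
  funext x
  have hsplit : T ⁻¹' {x} ∩ Icc 0 t = T ⁻¹' {x} ∩ Icc 0 s ∪ T ⁻¹' {x} ∩ Ioc s t := by
    rw [← inter_union_distrib_left, Icc_union_Ioc_eq_Icc hs hst]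
  have hdisj : Disjoint (T ⁻¹' {x} ∩ Icc 0 s) (T ⁻¹' {x} ∩ Ioc s t) :=
    ((Iic_disjoint_Ioi le_rfl).mono Icc_subset_Iic_self Ioc_subset_Ioi_self).mono
      inter_subset_right inter_subset_right
  rcases eq_or_ne x x₀ with rfl | hx
  · rw [inter_eq_right.2 hT] at hsplit hdisj
    rw [odo, hsplit, measure_union hdisj measurableSet_Ioc,
      ENNReal.toReal_add (volume_preimage_inter_Icc_ne_top T s x) (by simp [Real.volume_Ioc])]
    simp [odo, Real.volume_Ioc, sub_nonneg.2 hst]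
  · have hempty : T ⁻¹' {x} ∩ Ioc s t = ∅ :=
      eq_empty_of_forall_notMem fun r ⟨hr, hrI⟩ => hx (hr.symm.trans (hT hrI))
    simp [odo, hsplit, hempty, hx]

end Odometer

section Toppling

variable {d : ℕ} {T : ℝ → Pos d} {τ : ℝ}

theorem IsToppling.countable_not_continuousAt (hT : IsToppling d T τ) :
    {s ∈ Icc 0 τ | ¬ ContinuousAt T s}.Countable := by
  have hsub : {s ∈ Icc 0 τ | ¬ ContinuousAt T s} ⊆
      {τ} ∪ ⋃ n : ℕ, {s ∈ Icc 0 (τ - 1 / (n + 1)) | ¬ ContinuousAt T s} := by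
    rintro s ⟨⟨hs0, hsτ⟩, hs⟩
    rcases hsτ.eq_or_lt with rfl | hlt
    · exact Or.inl rfl
    · obtain ⟨n, hn⟩ := exists_nat_one_div_lt (sub_pos.2 hlt)
      exact Or.inr (mem_iUnion.2 ⟨n, ⟨hs0, by linarith⟩, hs⟩)
  exact ((countable_singleton τ).union (countable_iUnion fun n =>
    (hT _ (sub_lt_self τ Nat.one_div_pos_of_nat)).countable)).mono hsub

theorem IsToppling.tsum_volume_preimage_inter_Icc (hT : IsToppling d T τ) :
    ∑' x, volume (T ⁻¹' {x} ∩ Icc 0 τ) = ENNReal.ofReal τ := by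
  rw [← measure_iUnion
    (fun x y hxy => (pairwise_disjoint_fiber T hxy).mono inter_subset_left inter_subset_left)
    (fun x => measurableSet_preimage_inter_of_countable_not_continuousAt measurableSet_Icc
      hT.countable_not_continuousAt (isOpen_discrete {x})),
    ← iUnion_inter, ← preimage_iUnion, iUnion_of_singleton, preimage_univ, univ_inter,
    Real.volume_Icc, sub_zero]

theorem IsToppling.exists_Ioc_subset_preimage (hT : IsToppling d T τ) {c : ℝ} (hc0 : 0 ≤ c)
    (hcτ : c < τ) : ∃ m ∈ Ioc c τ, Ioc c m ⊆ T ⁻¹' {T m} := by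
  obtain ⟨t', hct', ht'τ⟩ := exists_between hcτ
  set F := {s ∈ Icc 0 t' | ¬ ContinuousAt T s}
  have hF : (F \ {c})ᶜ ∈ 𝓝[>] c :=
    nhdsWithin_le_nhds (((hT t' ht'τ).sdiff).isClosed.isOpen_compl.mem_nhds (by simp))
  obtain ⟨m', ⟨hcm', hm't'⟩, hsub⟩ :=
    (mem_nhdsGT_iff_exists_mem_Ioc_Ioo_subset hct').1 hF
  have hcont : ContinuousOn T (Ioo c m') := fun s hs =>
    ContinuousAt.continuousWithinAt <| not_not.1 fun h =>
      hsub hs ⟨⟨⟨hc0.trans hs.1.le, hs.2.le.trans hm't'⟩, h⟩, hs.1.ne'⟩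
  have hm : (c + m') / 2 ∈ Ioo c m' := ⟨by linarith, by linarith⟩
  refine ⟨(c + m') / 2, ⟨hm.1, by linarith⟩, fun s hs => ?_⟩
  exact isPreconnected_Ioo.constant hcont ⟨hs.1, hs.2.trans_lt hm.2⟩ hm

end Toppling

section LeastAction

variable {d : ℕ} {ν0 : Pos d → ℝ} {T : ℝ → Pos d} {τ : ℝ} {u : Pos d → ℝ}

theorem discLap_lt_discLap {f g : Pos d → ℝ} {x : Pos d} (hfg : ∀ y ≠ x, f y ≤ g y)
    (hx : g x < f x) : discLap d f x < discLap d g x := by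
  have hnbr : nbrSum d f x ≤ nbrSum d g x :=
    Finset.sum_le_sum fun i _ => add_le_add
      (hfg _ fun h => by simpa using congrFun h i) (hfg _ fun h => by simpa using congrFun h i)
  have := div_le_div_of_nonneg_right hnbr (by positivity : (0 : ℝ) ≤ 2 * d)
  unfold discLap
  linarith

theorem IsLegalToppling.odo_lt_of_Ioc_subset (hT : IsLegalToppling d ν0 T τ)
    (hu : ∀ x, ν0 x + discLap d u x ≤ 1) {c t : ℝ} {x₀ : Pos d} (hc0 : 0 ≤ c) (hct : c < t)
    (htτ : t ≤ τ) (hc : odo d T c ≤ u) (hI : Ioc c t ⊆ T ⁻¹' {x₀}) :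
    odo d T c x₀ < u x₀ := by
  by_contra! h
  have hodo := odo_eq_add_single hc0 hct.le hI
  have hlap : discLap d (odo d T t) x₀ < discLap d u x₀ :=
    discLap_lt_discLap (fun y hy => by simpa [hodo, hy] using hc y)
      (by simp only [hodo, Pi.add_apply, Pi.single_eq_same]; linarith)
  have hlegal := hT.2 t ⟨hc0.trans hct.le, htτ⟩
  rw [show T t = x₀ from hI ⟨hct, le_rfl⟩, massAt] at hlegal
  linarith [hu x₀]

theorem IsLegalToppling.odo_le (hT : IsLegalToppling d ν0 T τ) (hτ : 0 ≤ τ) (hu0 : 0 ≤ u)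
    (hu : ∀ x, ν0 x + discLap d u x ≤ 1) : odo d T τ ≤ u := by
  set S := {t | odo d T t ≤ u}
  have hS : IsClosed (S ∩ Icc 0 τ) :=
    (isClosed_le (continuous_odo T) continuous_const).inter isClosed_Icc
  have h0 : (0 : ℝ) ∈ S := by simpa [S, odo_zero] using hu0
  refine hS.Icc_subset_of_forall_exists_gt h0 ?_ ⟨hτ, le_rfl⟩
  rintro c ⟨hcS, hc0, hcτ⟩ y hy
  obtain ⟨m, ⟨hcm, hmτ⟩, hI⟩ := hT.1.exists_Ioc_subset_preimage hc0 hcτ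
  have hroom := hT.odo_lt_of_Ioc_subset hu hc0 hcm hmτ hcS hI
  set t := min (min y m) (c + (u (T m) - odo d T c (T m)))
  have hct : c < t := lt_min (lt_min hy hcm) (by linarith)
  have htm : t ≤ m := (min_le_left _ _).trans (min_le_right _ _)
  refine ⟨t, ?_, hct, (min_le_left _ _).trans (min_le_left _ _)⟩
  intro x
  rw [odo_eq_add_single hc0 hct.le ((Ioc_subset_Ioc_right htm).trans hI), Pi.add_apply]
  rcases eq_or_ne x (T m) with rfl | hx
  · rw [Pi.single_eq_same]
    linarith [min_le_right (min y m) (c + (u (T m) - odo d T c (T m)))]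
  · rw [Pi.single_eq_of_ne hx, add_zero]
    exact hcS x

end LeastAction

theorem divisible_sandpile_abelian_general (d : ℕ)
    (ν0 : Pos d → ℝ)
    (T₁ T₂ : ℝ → Pos d) (τ₁ τ₂ : ℝ) (hτ₁ : 0 ≤ τ₁) (hτ₂ : 0 ≤ τ₂)
    (hleg₁ : IsLegalToppling d ν0 T₁ τ₁) (hcom₁ : IsCompleteToppling d ν0 T₁ τ₁)
    (hleg₂ : IsLegalToppling d ν0 T₂ τ₂) (hcom₂ : IsCompleteToppling d ν0 T₂ τ₂) :
    (∀ x, volume (T₁ ⁻¹' {x} ∩ Set.Icc 0 τ₁) = volume (T₂ ⁻¹' {x} ∩ Set.Icc 0 τ₂)) ∧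
    τ₁ = τ₂ ∧
    (∀ x, massAt d ν0 T₁ τ₁ x = massAt d ν0 T₂ τ₂ x) := by
  have hodo : odo d T₁ τ₁ = odo d T₂ τ₂ :=
    le_antisymm (hleg₁.odo_le hτ₁ (odo_nonneg T₂ τ₂) hcom₂)
      (hleg₂.odo_le hτ₂ (odo_nonneg T₁ τ₁) hcom₁)
  have hvol : ∀ x, volume (T₁ ⁻¹' {x} ∩ Icc 0 τ₁) = volume (T₂ ⁻¹' {x} ∩ Icc 0 τ₂) :=
    fun x => (ENNReal.toReal_eq_toReal_iff' (volume_preimage_inter_Icc_ne_top T₁ τ₁ x)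
      (volume_preimage_inter_Icc_ne_top T₂ τ₂ x)).1 (congrFun hodo x)
  refine ⟨hvol, ?_, fun x => by rw [massAt, massAt, hodo]⟩
  rw [← ENNReal.ofReal_eq_ofReal_iff hτ₁ hτ₂, ← hleg₁.1.tsum_volume_preimage_inter_Icc,
    ← hleg₂.1.tsum_volume_preimage_inter_Icc]
  exact tsum_congr hvol

/-- **Abelian property of the divisible sandpile.**
Let `ν_0 : ℤ^d → [0,∞)` be an initial mass configuration.  If `T₁ : [0,τ₁] → ℤ^d` and
`T₂ : [0,τ₂] → ℤ^d` are complete legal toppling functions for `ν_0`, then for every `x`,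
`Leb(T₁⁻¹(x)) = Leb(T₂⁻¹(x))`; in particular `τ₁ = τ₂` and the final mass configurations
coincide. -/
theorem divisible_sandpile_abelian (d : ℕ) (hd : 1 ≤ d)
    (ν0 : Pos d → ℝ) (hν0 : ∀ x, 0 ≤ ν0 x)
    (T₁ T₂ : ℝ → Pos d) (τ₁ τ₂ : ℝ) (hτ₁ : 0 ≤ τ₁) (hτ₂ : 0 ≤ τ₂)
    (hleg₁ : IsLegalToppling d ν0 T₁ τ₁) (hcom₁ : IsCompleteToppling d ν0 T₁ τ₁)
    (hleg₂ : IsLegalToppling d ν0 T₂ τ₂) (hcom₂ : IsCompleteToppling d ν0 T₂ τ₂) :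
    (∀ x, volume (T₁ ⁻¹' {x} ∩ Set.Icc 0 τ₁) = volume (T₂ ⁻¹' {x} ∩ Set.Icc 0 τ₂)) ∧
    τ₁ = τ₂ ∧
    (∀ x, massAt d ν0 T₁ τ₁ x = massAt d ν0 T₂ τ₂ x) :=
  divisible_sandpile_abelian_general d ν0 T₁ T₂ τ₁ τ₂ hτ₁ hτ₂ hleg₁ hcom₁ hleg₂ hcom₂
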